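/- For a simple random walk on a connected graph G with m edges, the commute time between any two vertices i and j equals 2m times the effective resistance: m_{i,j} + m_{j,i} = 2m · r^G_{i,j}. -/

import Mathlib

open SimpleGraph Finset Matrix
open scoped Classical

noncomputable section

/-- Number of spanning trees of `G`. -/
noncomputable def tau {V : Type*} [Fintype V] (G : SimpleGraph V) : ℕ :=
  Set.ncard {H : SimpleGraph V | H ≤ G ∧ H.Connected ∧ H.IsAcyclic}

/-- Number of 2-tree spanning forests of `G` separating `i` and `j`. -/
noncomputable def twoForest {V : Type*} [Fintype V] (G : SimpleGraph V) (i j : V) : ℕ :=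
  Set.ncard {H : SimpleGraph V | H ≤ G ∧ H.IsAcyclic ∧ ¬ H.Reachable i j ∧
    ∀ v, H.Reachable i v ∨ H.Reachable j v}

/-- The four Penrose equations: `B` is the Moore–Penrose inverse of `A`. -/
def IsMoorePenroseInv {n : Type*} [Fintype n] (A B : Matrix n n ℝ) : Prop :=
  A * B * A = A ∧ B * A * B = B ∧ (A * B)ᵀ = A * B ∧ (B * A)ᵀ = B * A

/-- Laplacian matrix of a graph. -/
noncomputable def lap {V : Type*} [Fintype V] [DecidableEq V] (G : SimpleGraph V) :
    Matrix V V ℝ :=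
  fun i j => if i = j then (G.degree i : ℝ) else if G.Adj i j then -1 else 0

/-- Effective resistance computed from a (Moore–Penrose inverse) matrix `Ld`. -/
noncomputable def effRes {V : Type*} [Fintype V] [DecidableEq V] (Ld : Matrix V V ℝ)
    (i j : V) : ℝ :=
  (Pi.single i 1 - Pi.single j 1) ⬝ᵥ Ld.mulVec (Pi.single i 1 - Pi.single j 1)

/-- Transition matrix of the simple random walk on `G`. -/
noncomputable def transP {V : Type*} [Fintype V] (G : SimpleGraph V) : Matrix V V ℝ :=
  fun i j => if G.Adj i j then (1 : ℝ) / (G.degree i) else 0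

/-- Stationary distribution of the simple random walk. -/
noncomputable def statPi {V : Type*} [Fintype V] (G : SimpleGraph V) (i : V) : ℝ :=
  (G.degree i : ℝ) / (2 * G.edgeFinset.card)

/-- `M` is the matrix of mean first passage times of the random walk on `G`. -/
def IsMFPT {V : Type*} [Fintype V] (G : SimpleGraph V) (M : V → V → ℝ) : Prop :=
  (∀ j, M j j = 0) ∧ ∀ i j, i ≠ j → M i j = 1 + ∑ k, transP G i k * M k j

/-- Kemeny's constant. -/
noncomputable def kemeny {V : Type*} [Fintype V] (G : SimpleGraph V) (M : V → V → ℝ) : ℝ :=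
  ∑ i, ∑ j ∈ Finset.univ.filter (· ≠ i), statPi G i * M i j * statPi G j

/-- Accessibility index of vertex `v`. -/
noncomputable def acc {V : Type*} [Fintype V] (G : SimpleGraph V) (M : V → V → ℝ) (v : V) : ℝ :=
  ∑ i ∈ Finset.univ.filter (· ≠ v), statPi G i * M i v

/-- Joining `G1` and `G2` by the bridge `v1 ∼ v2`. -/
def chainTwo {V1 V2 : Type*} (G1 : SimpleGraph V1) (G2 : SimpleGraph V2)
    (v1 : V1) (v2 : V2) : SimpleGraph (V1 ⊕ V2) where
  Adj p q :=
    match p, q with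
    | Sum.inl a, Sum.inl b => G1.Adj a b
    | Sum.inr a, Sum.inr b => G2.Adj a b
    | Sum.inl a, Sum.inr b => a = v1 ∧ b = v2
    | Sum.inr a, Sum.inl b => b = v1 ∧ a = v2
  symm := by
    constructor
    rintro (a | a) (b | b) h
    · exact G1.adj_symm h
    · exact ⟨h.1, h.2⟩
    · exact ⟨h.1, h.2⟩
    · exact G2.adj_symm h
  loopless := by
    constructor
    rintro (a | a) h
    · exact G1.irrefl h
    · exact G2.irrefl h

end

/-!
Let `L` be the Laplacian and `h j` the column `k ↦ m_{k,j}` of hitting times. The first-step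
equations say `L h j = d - 2m eⱼ`, with `d` the degree vector (the `j`-th entry is forced by the
columns of `L` summing to zero). Hence `y = h j - h i` solves `L y = 2m (eᵢ - eⱼ)`. As
`L L⁺ L = L`, the vector `y - L⁺ L y` lies in the kernel of `L`, which for a connected graph
consists of the constant vectors; so `m_{i,j} + m_{j,i} = yᵢ - yⱼ` equals
`2m ((L⁺(eᵢ - eⱼ))ᵢ - (L⁺(eᵢ - eⱼ))ⱼ) = 2m r_{i,j}`.
-/

section

variable {V : Type*} [Fintype V] {G : SimpleGraph V}

lemma degree_mul_sum_transP_mul (x : V → ℝ) (k : V) :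
    G.degree k * ∑ l, transP G k l * x l = ∑ l ∈ G.neighborFinset k, x l := by
  by_cases hk : G.degree k = 0
  · rw [card_eq_zero.mp hk]
    simp [hk]
  · have hk' : (G.degree k : ℝ) ≠ 0 := by exact_mod_cast hk
    simp only [transP, ite_mul, zero_mul, ← sum_filter, mul_sum]
    refine sum_congr (by ext; simp) fun l _ ↦ ?_
    field_simp

variable [DecidableEq V]

variable (G) in
lemma lap_eq_lapMatrix : lap G = G.lapMatrix ℝ := by
  ext k l
  by_cases hkl : k = l
  · subst hkl
    simp [lap, lapMatrix, degMatrix]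
  · by_cases hadj : G.Adj k l <;> simp [lap, lapMatrix, degMatrix, adjMatrix_apply, hkl, hadj]

lemma sum_lapMatrix_mulVec {R : Type*} [CommRing R] [DecidableRel G.Adj] (x : V → R) :
    ∑ k, (G.lapMatrix R *ᵥ x) k = 0 := by
  have hsymm : 1 ᵥ* G.lapMatrix R = 0 := by
    rw [← mulVec_transpose, isSymm_lapMatrix]
    exact lapMatrix_mulVec_const_eq_zero G
  rw [← one_dotProduct, dotProduct_mulVec, hsymm, zero_dotProduct]

namespace IsMFPT

variable {M : V → V → ℝ}

lemma lapMatrix_mulVec_apply_of_ne (hM : IsMFPT G M) {j k : V} (hk : k ≠ j) :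
    (G.lapMatrix ℝ *ᵥ fun l ↦ M l j) k = G.degree k := by
  rw [lapMatrix_mulVec_apply, hM.2 k j hk, mul_add, degree_mul_sum_transP_mul]
  ring

lemma lapMatrix_mulVec (hM : IsMFPT G M) (j : V) :
    G.lapMatrix ℝ *ᵥ (fun l ↦ M l j) =
      (fun k ↦ (G.degree k : ℝ)) - (2 * #G.edgeFinset : ℝ) • Pi.single j 1 := by
  set f := G.lapMatrix ℝ *ᵥ (fun l ↦ M l j) - fun k ↦ (G.degree k : ℝ)
  have hf_ne : ∀ k, k ≠ j → f k = 0 := fun k hk ↦ by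
    simp [f, hM.lapMatrix_mulVec_apply_of_ne hk]
  have hf_sum : ∑ k, f k = -(2 * #G.edgeFinset) := by
    have hdeg : ∑ k, (G.degree k : ℝ) = 2 * #G.edgeFinset := by
      exact_mod_cast G.sum_degrees_eq_twice_card_edges
    simp [f, sum_sub_distrib, sum_lapMatrix_mulVec, hdeg]
  have hf : f = f j • Pi.single j 1 := by
    ext k
    by_cases hk : k = j
    · subst hk; simp
    · simp [hf_ne k hk, hk]
  rw [sum_eq_single j (fun k _ ↦ hf_ne k) (by simp)] at hf_sum
  rw [hf_sum, neg_smul, sub_eq_iff_eq_add'] at hf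
  rwa [← sub_eq_add_neg] at hf

end IsMFPT

lemma sub_eq_of_lapMatrix_mul_mul_eq (hG : G.Connected) {Ld : Matrix V V ℝ}
    (hLd : G.lapMatrix ℝ * Ld * G.lapMatrix ℝ = G.lapMatrix ℝ) (y : V → ℝ) (a b : V) :
    y a - y b = (Ld *ᵥ (G.lapMatrix ℝ *ᵥ y)) a - (Ld *ᵥ (G.lapMatrix ℝ *ᵥ y)) b := by
  have hker : G.lapMatrix ℝ *ᵥ (y - Ld *ᵥ (G.lapMatrix ℝ *ᵥ y)) = 0 := by
    rw [mulVec_sub, mulVec_mulVec, mulVec_mulVec, hLd, sub_self]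
  have := lapMatrix_mulVec_eq_zero_iff_forall_reachable G |>.mp hker a b (hG.preconnected a b)
  simp only [Pi.sub_apply] at this
  linarith

lemma effRes_eq_sub (Ld : Matrix V V ℝ) (i j : V) :
    effRes Ld i j = (Ld *ᵥ (Pi.single i 1 - Pi.single j 1)) i -
      (Ld *ᵥ (Pi.single i 1 - Pi.single j 1)) j := by
  simp [effRes, sub_dotProduct, single_dotProduct]

end

/-- commute time identity `m_{i,j} + m_{j,i} = 2m · r^G_{i,j}`. -/
theorem commute_time_eq {V : Type*} [Fintype V] [DecidableEq V]
    (G : SimpleGraph V) (hG : G.Connected) (M : V → V → ℝ) (hM : IsMFPT G M)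
    (Ld : Matrix V V ℝ) (hLd : IsMoorePenroseInv (lap G) Ld) (i j : V) :
    M i j + M j i = 2 * (G.edgeFinset.card : ℝ) * effRes Ld i j := by
  set y : V → ℝ := (fun l ↦ M l j) - (fun l ↦ M l i)
  have hLy : G.lapMatrix ℝ *ᵥ y = (2 * #G.edgeFinset : ℝ) • (Pi.single i 1 - Pi.single j 1) := by
    rw [mulVec_sub, hM.lapMatrix_mulVec, hM.lapMatrix_mulVec, smul_sub]
    abel
  rw [lap_eq_lapMatrix] at hLd
  calc M i j + M j i = y i - y j := by simp [y, hM.1 i, hM.1 j]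
    _ = _ := by
      rw [sub_eq_of_lapMatrix_mul_mul_eq hG hLd.1, hLy, mulVec_smul, effRes_eq_sub]
      simp only [Pi.smul_apply, smul_eq_mul]
      ring
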